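/- Let B ∈ ℝ^{I₁×⋯×I_N} and for each n let Q_n ∈ ℝ^{I_n×r_n} have orthonormal columns. Define Y₀ = B and Y_n = B ×₁ Q₁Q₁ᵀ ⋯ ×_n Q_nQ_nᵀ for n ∈ [N]. Then ‖B ×₁ Q₁Q₁ᵀ ⋯ ×_N Q_NQ_Nᵀ − B‖_F² = ‖Σ_{n=1}^N (Y_n − Y_{n-1})‖_F² ≤ N · Σ_{n=1}^N ‖B ×_n (I − Q_nQ_nᵀ)‖_F², and moreover ‖Y_n − Y_{n-1}‖_F ≤ ‖B ×_n (I − Q_nQ_nᵀ)‖_F for each n. -/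
import Mathlib


open Matrix

section AuxLemmas

variable {N : ℕ} {I : Fin N → ℕ}

/-- Orthogonal projections are non-expansive on vectors (squared norms). -/
lemma mulVec_proj_sq_le {k r : ℕ} (Q : Matrix (Fin k) (Fin r) ℝ) (hQ : Qᵀ * Q = 1)
    (v : Fin k → ℝ) :
    ∑ x, ((Q * Qᵀ) *ᵥ v) x ^ 2 ≤ ∑ x, v x ^ 2 := by
  set P := Q * Qᵀ with hP
  have hPsymm : Pᵀ = P := by rw [hP, Matrix.transpose_mul, Matrix.transpose_transpose]
  have hPP : P * P = P := by
    rw [hP, Matrix.mul_assoc, ← Matrix.mul_assoc Qᵀ, hQ, Matrix.one_mul]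
  have h1 : P *ᵥ v ⬝ᵥ (P *ᵥ v) = P *ᵥ v ⬝ᵥ v := by
    conv_lhs => rw [Matrix.dotProduct_mulVec]
    rw [← Matrix.mulVec_transpose, hPsymm, Matrix.mulVec_mulVec, hPP]
  have hcross : ∑ x, (P *ᵥ v) x * (v x - (P *ᵥ v) x) = 0 := by
    have : ∑ x, (P *ᵥ v) x * (v x - (P *ᵥ v) x)
        = P *ᵥ v ⬝ᵥ v - P *ᵥ v ⬝ᵥ (P *ᵥ v) := by
      simp [dotProduct, mul_sub, Finset.sum_sub_distrib]
    rw [this, h1, sub_self]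
  have hexp : ∑ x, v x ^ 2
      = ∑ x, ((P *ᵥ v) x) ^ 2 + ∑ x, (v x - (P *ᵥ v) x) ^ 2
        + 2 * ∑ x, (P *ᵥ v) x * (v x - (P *ᵥ v) x) := by
    rw [← Finset.sum_add_distrib, Finset.mul_sum, ← Finset.sum_add_distrib]
    exact Finset.sum_congr rfl fun x _ => by ring
  have hnn : (0:ℝ) ≤ ∑ x, (v x - (P *ᵥ v) x) ^ 2 :=
    Finset.sum_nonneg fun x _ => sq_nonneg _
  rw [hexp, hcross]
  linarith

end AuxLemmas

/-- The `n`-mode product of an order-`N` tensor with a square matrix `M`. -/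
def modeMul {N : ℕ} {I : Fin N → ℕ} (n : Fin N)
    (M : Matrix (Fin (I n)) (Fin (I n)) ℝ)
    (T : (∀ i, Fin (I i)) → ℝ) : (∀ i, Fin (I i)) → ℝ :=
  fun idx => ∑ j, M (idx n) j * T (Function.update idx n j)

/-- `partialProj Q k B = Y_k = B ×₁ Q₁Q₁ᵀ ⋯ ×_k Q_kQ_kᵀ`, applying the
projections along the first `k` modes only (`Y₀ = B`). -/
def partialProj {N : ℕ} {I : Fin N → ℕ} {r : Fin N → ℕ}
    (Q : ∀ n, Matrix (Fin (I n)) (Fin (r n)) ℝ)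
    (k : ℕ) (B : (∀ i, Fin (I i)) → ℝ) : (∀ i, Fin (I i)) → ℝ :=
  ((List.finRange N).take k).foldl (fun T n => modeMul n (Q n * (Q n)ᵀ) T) B

section ModeMulLemmas

variable {N : ℕ} {I : Fin N → ℕ}

lemma modeMul_one (n : Fin N) (T : (∀ i, Fin (I i)) → ℝ) :
    modeMul n (1 : Matrix (Fin (I n)) (Fin (I n)) ℝ) T = T := by
  funext idx
  simp [modeMul, Matrix.one_apply]

lemma modeMul_sub (n : Fin N) (M M' : Matrix (Fin (I n)) (Fin (I n)) ℝ)
    (T : (∀ i, Fin (I i)) → ℝ) (idx : ∀ i, Fin (I i)) :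
    modeMul n (M - M') T idx = modeMul n M T idx - modeMul n M' T idx := by
  simp [modeMul, sub_mul, Finset.sum_sub_distrib]

/-- Mode products along distinct modes commute. -/
lemma modeMul_comm {m n : Fin N} (h : m ≠ n)
    (M : Matrix (Fin (I m)) (Fin (I m)) ℝ) (M' : Matrix (Fin (I n)) (Fin (I n)) ℝ)
    (T : (∀ i, Fin (I i)) → ℝ) :
    modeMul m M (modeMul n M' T) = modeMul n M' (modeMul m M T) := by
  funext idx
  simp only [modeMul, Finset.mul_sum]
  rw [Finset.sum_comm]
  refine Finset.sum_congr rfl fun k _ => Finset.sum_congr rfl fun j _ => ?_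
  rw [Function.update_of_ne h.symm, Function.update_of_ne h, Function.update_comm h]
  ring

/-- Slicing a mode product along the `n`-th mode gives a matrix-vector product. -/
lemma modeMul_apply_symm (n : Fin N) (M : Matrix (Fin (I n)) (Fin (I n)) ℝ)
    (T : (∀ i, Fin (I i)) → ℝ) (x : Fin (I n))
    (rest : ∀ j : {j : Fin N // j ≠ n}, Fin (I j)) :
    modeMul n M T ((Equiv.piSplitAt n (fun i => Fin (I i))).symm (x, rest)) =
      (M *ᵥ fun j => T ((Equiv.piSplitAt n (fun i => Fin (I i))).symm (j, rest))) x := by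
  set e := Equiv.piSplitAt n (fun i => Fin (I i)) with he
  set g := e.symm (x, rest) with hgdef
  have hg : e g = (x, rest) := e.apply_symm_apply _
  have hgn : g n = x := congrArg Prod.fst hg
  have h2 : (fun m : {m : Fin N // m ≠ n} => g m.val) = rest := congrArg Prod.snd hg
  have hupd : ∀ j, e.symm (j, rest) = Function.update g n j := by
    intro j
    have hej : e (Function.update g n j) = (j, rest) := by
      refine Prod.ext ?_ ?_
      · show Function.update g n j n = j
        simp
      · show (fun m : {m : Fin N // m ≠ n} => Function.update g n j m.val) = rest
        funext m
        rw [Function.update_of_ne m.2]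
        exact congrFun h2 m
    rw [← hej, Equiv.symm_apply_apply]
  show modeMul n M T g = _
  simp only [modeMul, Matrix.mulVec, dotProduct, hgn]
  exact Finset.sum_congr rfl fun j _ => by rw [hupd j]

/-- Multiplying along a mode by an orthogonal projection does not increase
the (squared) Frobenius norm. -/
lemma modeMul_proj_sq_le {rn : ℕ} (n : Fin N)
    (Q : Matrix (Fin (I n)) (Fin rn) ℝ)
    (hQ : Qᵀ * Q = 1) (T : (∀ i, Fin (I i)) → ℝ) :
    ∑ idx, (modeMul n (Q * Qᵀ) T idx) ^ 2 ≤ ∑ idx, T idx ^ 2 := by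
  have L : ∀ (f : (∀ i, Fin (I i)) → ℝ),
      ∑ idx, f idx = ∑ rest, ∑ x,
        f ((Equiv.piSplitAt n (fun i => Fin (I i))).symm (x, rest)) := by
    intro f
    rw [← Equiv.sum_comp (Equiv.piSplitAt n (fun i => Fin (I i))).symm f,
      Fintype.sum_prod_type_right]
  rw [L (fun idx => (modeMul n (Q * Qᵀ) T idx) ^ 2), L (fun idx => T idx ^ 2)]
  refine Finset.sum_le_sum fun rest _ => ?_
  have h1 : ∑ x,
        (modeMul n (Q * Qᵀ) T ((Equiv.piSplitAt n (fun i => Fin (I i))).symm (x, rest))) ^ 2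
      = ∑ x, (((Q * Qᵀ) *ᵥ
          fun j => T ((Equiv.piSplitAt n (fun i => Fin (I i))).symm (j, rest))) x) ^ 2 :=
    Finset.sum_congr rfl fun x _ => by rw [modeMul_apply_symm]
  rw [h1]
  exact mulVec_proj_sq_le Q hQ _

end ModeMulLemmas

section PartialProjLemmas

variable {N : ℕ} {I : Fin N → ℕ} {r : Fin N → ℕ}
  (Q : ∀ n, Matrix (Fin (I n)) (Fin (r n)) ℝ)

lemma foldl_modeMul_comm (l : List (Fin N)) (n : Fin N) (hn : ∀ m ∈ l, m ≠ n)
    (M : Matrix (Fin (I n)) (Fin (I n)) ℝ) (T : (∀ i, Fin (I i)) → ℝ) :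
    l.foldl (fun T m => modeMul m (Q m * (Q m)ᵀ) T) (modeMul n M T)
      = modeMul n M (l.foldl (fun T m => modeMul m (Q m * (Q m)ᵀ) T) T) := by
  induction l generalizing T with
  | nil => rfl
  | cons a l ih =>
    simp only [List.foldl_cons]
    rw [modeMul_comm (hn a (by simp)) (Q a * (Q a)ᵀ) M T]
    exact ih (fun m hm => hn m (List.mem_cons_of_mem a hm)) _

lemma foldl_sq_le (hQ : ∀ n, (Q n)ᵀ * Q n = 1) (l : List (Fin N))
    (T : (∀ i, Fin (I i)) → ℝ) :
    ∑ idx, (l.foldl (fun T m => modeMul m (Q m * (Q m)ᵀ) T) T idx) ^ 2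
      ≤ ∑ idx, T idx ^ 2 := by
  induction l generalizing T with
  | nil => exact le_refl _
  | cons a l ih =>
    simp only [List.foldl_cons]
    exact le_trans (ih _) (modeMul_proj_sq_le a (Q a) (hQ a) T)

lemma partialProj_succ (n : Fin N) (B : (∀ i, Fin (I i)) → ℝ) :
    partialProj Q ((n : ℕ) + 1) B = modeMul n (Q n * (Q n)ᵀ) (partialProj Q (n : ℕ) B) := by
  unfold partialProj
  rw [List.take_succ]
  have h : (List.finRange N)[(n : ℕ)]? = some n := by
    rw [List.getElem?_eq_getElem (by simp)]
    simp
  rw [h]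
  simp [List.foldl_append]

lemma mem_take_ne (n : Fin N) {m : Fin N}
    (hm : m ∈ (List.finRange N).take (n : ℕ)) : m ≠ n := by
  rw [List.mem_take_iff_getElem] at hm
  obtain ⟨i, hi, him⟩ := hm
  simp only [List.getElem_finRange] at him
  intro hcon
  subst hcon
  have : (m : ℕ) = i := by rw [← him]; simp [Fin.ext_iff]
  omega

/-- Per-mode bound (squared version):
`‖Y_{n+1} − Y_n‖_F² ≤ ‖B ×_n (I − Q_nQ_nᵀ)‖_F²`. -/
lemma permode_sq (hQ : ∀ n, (Q n)ᵀ * Q n = 1) (n : Fin N) (B : (∀ i, Fin (I i)) → ℝ) :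
    ∑ idx, (partialProj Q ((n : ℕ) + 1) B idx - partialProj Q (n : ℕ) B idx) ^ 2
      ≤ ∑ idx, (modeMul n (1 - Q n * (Q n)ᵀ) B idx) ^ 2 := by
  have hcomm : partialProj Q (n : ℕ) (modeMul n (1 - Q n * (Q n)ᵀ) B)
      = modeMul n (1 - Q n * (Q n)ᵀ) (partialProj Q (n : ℕ) B) :=
    foldl_modeMul_comm Q _ n (fun m hm => mem_take_ne n hm) _ B
  have hd : ∀ idx, partialProj Q ((n : ℕ) + 1) B idx - partialProj Q (n : ℕ) B idx
      = - partialProj Q (n : ℕ) (modeMul n (1 - Q n * (Q n)ᵀ) B) idx := by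
    intro idx
    rw [hcomm, partialProj_succ Q n B]
    have h1 := modeMul_sub n (1 : Matrix (Fin (I n)) (Fin (I n)) ℝ) (Q n * (Q n)ᵀ)
      (partialProj Q (n : ℕ) B) idx
    have h2 := congrFun (modeMul_one n (partialProj Q (n : ℕ) B)) idx
    linarith
  have heq : ∑ idx, (partialProj Q ((n : ℕ) + 1) B idx - partialProj Q (n : ℕ) B idx) ^ 2
      = ∑ idx, (partialProj Q (n : ℕ) (modeMul n (1 - Q n * (Q n)ᵀ) B) idx) ^ 2 :=
    Finset.sum_congr rfl fun idx _ => by rw [hd idx]; ring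
  rw [heq]
  exact foldl_sq_le Q hQ _ _

end PartialProjLemmas

/-- telescoping decomposition of the multilinear projection error,
the resulting bound
`‖B ×₁ Q₁Q₁ᵀ ⋯ ×_N Q_NQ_Nᵀ − B‖_F² ≤ N · Σ_n ‖B ×_n (I − Q_nQ_nᵀ)‖_F²`, and
the per-mode bound `‖Y_n − Y_{n−1}‖_F ≤ ‖B ×_n (I − Q_nQ_nᵀ)‖_F`. -/
theorem partialProj_telescoping_bounds {N : ℕ} {I : Fin N → ℕ} {r : Fin N → ℕ}
    (B : (∀ i, Fin (I i)) → ℝ)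
    (Q : ∀ n, Matrix (Fin (I n)) (Fin (r n)) ℝ)
    (hQ : ∀ n, (Q n)ᵀ * Q n = 1) :
    ((fun idx => partialProj Q N B idx - B idx) =
      fun idx => ∑ n ∈ Finset.range N, (partialProj Q (n + 1) B idx - partialProj Q n B idx)) ∧
    (∑ idx, (partialProj Q N B idx - B idx) ^ 2 ≤
      (N : ℝ) * ∑ n : Fin N, ∑ idx, (modeMul n (1 - Q n * (Q n)ᵀ) B idx) ^ 2) ∧
    (∀ n : Fin N,
      Real.sqrt (∑ idx, (partialProj Q ((n : ℕ) + 1) B idx - partialProj Q (n : ℕ) B idx) ^ 2) ≤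
        Real.sqrt (∑ idx, (modeMul n (1 - Q n * (Q n)ᵀ) B idx) ^ 2)) := by
  have tel : (fun idx => partialProj Q N B idx - B idx) =
      fun idx => ∑ n ∈ Finset.range N,
        (partialProj Q (n + 1) B idx - partialProj Q n B idx) := by
    funext idx
    rw [Finset.sum_range_sub (fun k => partialProj Q k B idx)]
    rfl
  refine ⟨tel, ?_, fun n => Real.sqrt_le_sqrt (permode_sq Q hQ n B)⟩
  calc ∑ idx, (partialProj Q N B idx - B idx) ^ 2
      = ∑ idx, (∑ n ∈ Finset.range N,
          (partialProj Q (n + 1) B idx - partialProj Q n B idx)) ^ 2 :=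
        Finset.sum_congr rfl fun idx _ => by rw [congrFun tel idx]
    _ ≤ ∑ idx, (N : ℝ) * ∑ n ∈ Finset.range N,
          (partialProj Q (n + 1) B idx - partialProj Q n B idx) ^ 2 := by
        refine Finset.sum_le_sum fun idx _ => ?_
        have := sq_sum_le_card_mul_sum_sq (s := Finset.range N)
          (f := fun n => partialProj Q (n + 1) B idx - partialProj Q n B idx)
        simpa using this
    _ = (N : ℝ) * ∑ n ∈ Finset.range N, ∑ idx,
          (partialProj Q (n + 1) B idx - partialProj Q n B idx) ^ 2 := by
        rw [← Finset.mul_sum, Finset.sum_comm]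
    _ = (N : ℝ) * ∑ n : Fin N, ∑ idx,
          (partialProj Q ((n : ℕ) + 1) B idx - partialProj Q (n : ℕ) B idx) ^ 2 := by
        rw [Fin.sum_univ_eq_sum_range (fun k => ∑ idx,
          (partialProj Q (k + 1) B idx - partialProj Q k B idx) ^ 2)]
    _ ≤ (N : ℝ) * ∑ n : Fin N, ∑ idx, (modeMul n (1 - Q n * (Q n)ᵀ) B idx) ^ 2 := by
        have hsum := Finset.sum_le_sum (s := Finset.univ)
          (fun (n : Fin N) _ => permode_sq Q hQ n B)
        exact mul_le_mul_of_nonneg_left hsum (Nat.cast_nonneg N)
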